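/- arXiv:1110.3657 — 6 statements merged into one kernel-verified Lean document; each statement's English description precedes it below -/
import Mathlib

section
/- Let X and Y be complete lattices and (α, β) a Galois connection between them. Then the glued poset V = V₀ ⊔ V₁ (with i₀: X ≅ V₀, i₁: Y ≅ V₁, ordered by: i₀(x) ≤ i₀(x') iff x ≤ x'; i₁(y) ≤ i₁(y') iff y' ≤ y; i₁(y) ≰ i₀(x); i₀(x) ≤ i₁(y) iff y ≤ α(x)) is a complete lattice. Moreover the join i₀(x) ∨ i₁(y) in V equals i₁(α(x) ∧ y). -/
/-- The glued relation on `X ⊕ Y` determined by an order-reversing map `α : X → Y`. -/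
def glueLE {X Y : Type*} [LE X] [LE Y] (α : X → Y) : X ⊕ Y → X ⊕ Y → Prop
  | Sum.inl x, Sum.inl x' => x ≤ x'
  | Sum.inl x, Sum.inr y => y ≤ α x
  | Sum.inr _, Sum.inl _ => False
  | Sum.inr y, Sum.inr y' => y' ≤ y

/-- For complete lattices `X`, `Y` and a Galois connection `(α, β)` between them, the
glued poset `V = X ⊕ Y` is a complete lattice (a partial order in which every subset
has a least upper bound), and `i₀ x ∨ i₁ y = i₁ (α x ⊓ y)`. -/
theorem stmt4 {X Y : Type*} [CompleteLattice X] [CompleteLattice Y]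
    (α : X → Y) (β : Y → X) (hα : Antitone α) (hβ : Antitone β)
    (hconn : ∀ (x : X) (y : Y), y ≤ α x ↔ x ≤ β y) :
    (∀ v, glueLE α v v) ∧
    (∀ u v w, glueLE α u v → glueLE α v w → glueLE α u w) ∧
    (∀ u v, glueLE α u v → glueLE α v u → u = v) ∧
    (∀ S : Set (X ⊕ Y), ∃ v, (∀ w ∈ S, glueLE α w v) ∧
      ∀ u, (∀ w ∈ S, glueLE α w u) → glueLE α v u) ∧
    (∀ (x : X) (y : Y),
      glueLE α (Sum.inl x) (Sum.inr (α x ⊓ y) : X ⊕ Y) ∧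
      glueLE α (Sum.inr y : X ⊕ Y) (Sum.inr (α x ⊓ y)) ∧
      ∀ u, glueLE α (Sum.inl x) u → glueLE α (Sum.inr y) u →
        glueLE α (Sum.inr (α x ⊓ y) : X ⊕ Y) u) := by
  refine ⟨?_, ?_, ?_, ?_, ?_⟩
  · rintro (x | y) <;> simp [glueLE]
  · rintro (x | y) (x' | y') (x'' | y'') h1 h2 <;> simp_all [glueLE]
    · exact h1.trans h2
    · exact h1.trans h2
    · exact h1.trans (hβ h2)
    · exact h2.trans h1
  · rintro (x | y) (x' | y') h1 h2 <;> simp_all [glueLE]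
    · exact le_antisymm h1 h2
    · exact le_antisymm h2 h1
  · intro S
    set S0 : Set X := {x | Sum.inl x ∈ S}
    set S1 : Set Y := {y | Sum.inr y ∈ S}
    by_cases hS1 : S1.Nonempty
    · refine ⟨Sum.inr (α (sSup S0) ⊓ sInf S1), ?_, ?_⟩
      · rintro (x | y) hw
        · exact le_trans inf_le_left (hα (le_sSup hw))
        · exact le_trans inf_le_right (sInf_le hw)
      · rintro (x' | y') hu
        · exact absurd (hu _ hS1.choose_spec) id
        · refine le_inf ?_ (le_sInf fun y hy => hu _ hy)
          rw [hconn]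
          exact sSup_le fun x hx => (hconn x y').mp (hu _ hx)
    · refine ⟨Sum.inl (sSup S0), ?_, ?_⟩
      · rintro (x | y) hw
        · exact le_sSup hw
        · exact absurd ⟨y, hw⟩ hS1
      · rintro (x' | y') hu
        · exact sSup_le fun x hx => hu _ hx
        · rw [show (glueLE α (Sum.inl (sSup S0)) (Sum.inr y')) = (y' ≤ α (sSup S0)) from rfl,
            hconn]
          exact sSup_le fun x hx => (hconn x y').mp (hu _ hx)
  · intro x y
    refine ⟨inf_le_left, inf_le_right, ?_⟩
    rintro (x' | y') h1 h2
    · exact h2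
    · exact le_inf h1 h2
end

section
/- Let X be a complete lattice with a Galois connection (α, α) from X to itself (so α is order-reversing and y ≤ α(x) iff x ≤ α(y)) such that x ∧ α(x) = 0 for all x ∈ X. Then the glued complete lattice V = V₀ ⊔ V₁ (as in the gluing construction) becomes a complete ortholattice with orthocomplementation defined by (i₀(x))ᶜ := i₁(x) and (i₁(x))ᶜ := i₀(x); in particular for each z ∈ V one has z ∨ zᶜ = 1, z ∧ zᶜ = 0, (zᶜ)ᶜ = z, and z ↦ zᶜ is order-reversing. -/
/-- The orthocomplementation on the glued poset `X ⊕ X`: swap the two copies. -/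
def glueCompl {X : Type*} : X ⊕ X → X ⊕ X :=
  Sum.elim (fun x => Sum.inr x) (fun x => Sum.inl x)

/-- For a complete lattice `X` with a symmetric Galois self-connection `(α, α)`
satisfying `x ⊓ α x = ⊥`, the glued complete lattice `V = X ⊕ X` is a complete
ortholattice with orthocomplement swapping the two copies: the complement map
is an order-reversing involution, and `z ∨ zᶜ = 1` (the top `i₁ ⊥`) and
`z ∧ zᶜ = 0` (the bottom `i₀ ⊥`) for each `z ∈ V`. -/
theorem stmt5 {X : Type*} [CompleteLattice X]
    (α : X → X) (hα : Antitone α)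
    (hconn : ∀ x y : X, y ≤ α x ↔ x ≤ α y)
    (hbot : ∀ x : X, x ⊓ α x = ⊥) :
    (∀ z : X ⊕ X, glueCompl (glueCompl z) = z) ∧
    (∀ v w : X ⊕ X, glueLE α v w → glueLE α (glueCompl w) (glueCompl v)) ∧
    (∀ z : X ⊕ X, glueLE α z (Sum.inr ⊥)) ∧
    (∀ z : X ⊕ X, glueLE α (Sum.inl ⊥) z) ∧
    (∀ z u : X ⊕ X, glueLE α z u → glueLE α (glueCompl z) u → u = Sum.inr ⊥) ∧
    (∀ z u : X ⊕ X, glueLE α u z → glueLE α u (glueCompl z) → u = Sum.inl ⊥) := by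
  refine ⟨?_, ?_, ?_, ?_, ?_, ?_⟩
  · rintro (x | x) <;> rfl
  · rintro (x | x) (y | y) h
    · exact h
    · exact (hconn x y).mp h
    · exact h.elim
    · exact h
  · rintro (x | x) <;> simp [glueLE]
  · rintro (x | x)
    · exact bot_le
    · exact (hconn ⊥ x).mpr bot_le
  · rintro (x | x) (y | y) h1 h2
    · exact h2.elim
    · exact congrArg Sum.inr (le_antisymm (le_trans (le_inf h2 h1) (hbot x).le) bot_le)
    · exact h1.elim
    · exact congrArg Sum.inr (le_antisymm (le_trans (le_inf h1 h2) (hbot x).le) bot_le)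
  · rintro (x | x) (y | y) h1 h2
    · exact congrArg Sum.inl (le_antisymm
        (le_trans (le_inf h1 ((hconn y x).mp h2)) (hbot x).le) bot_le)
    · exact h1.elim
    · exact congrArg Sum.inl (le_antisymm
        (le_trans (le_inf h2 ((hconn y x).mp h1)) (hbot x).le) bot_le)
    · exact h2.elim
end

section
/- Let L be a nonempty complete meet-semilattice (every nonempty subset has a meet, and L has a least element 0). Let L' be the set of all nonempty join-closed order ideals of L, ordered by inclusion (an order ideal I is join-closed if whenever a subset of I has a join in L, that join lies in I). Then L' is a complete lattice, and the map i': L → L' sending y to the principal ideal {x ∈ L | x ≤ y} is an order isomorphism of L onto an order ideal of L'. -/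
/-- A nonempty join-closed order ideal of a poset `L`: a downward-closed subset which
contains the join (computed in `L`) of any of its subsets that has one. -/
def JoinClosedIdeal {L : Type*} [PartialOrder L] (I : Set L) : Prop :=
  I.Nonempty ∧ IsLowerSet I ∧ ∀ S ⊆ I, ∀ a : L, IsLUB S a → a ∈ I

/-- Let `L` be a nonempty complete meet-semilattice (least element, and every nonempty
subset has an infimum). Then the set `L'` of nonempty join-closed order ideals of `L`,
ordered by inclusion, is a complete lattice (every subset has a least upper bound),
and `y ↦ Set.Iic y` is an order isomorphism of `L` onto an order ideal of `L'`. -/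
theorem stmt6 {L : Type*} [PartialOrder L] [OrderBot L] [Nonempty L]
    (hmeet : ∀ S : Set L, S.Nonempty → ∃ a : L, IsGLB S a) :
    (∀ 𝒮 : Set {I : Set L // JoinClosedIdeal I}, ∃ m, IsLUB 𝒮 m) ∧
    ∃ i' : L → {I : Set L // JoinClosedIdeal I},
      (∀ y : L, (i' y : Set L) = Set.Iic y) ∧
      (∀ x y : L, x ≤ y ↔ i' x ≤ i' y) ∧
      IsLowerSet (Set.range i') := by
  have hbot : ∀ J : Set L, JoinClosedIdeal J → (⊥ : L) ∈ J := by
    rintro J ⟨⟨a, ha⟩, hlow, -⟩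
    exact hlow bot_le ha
  constructor
  · intro 𝒮
    set T : Set L := ⋂₀ {J | JoinClosedIdeal J ∧ ∀ I ∈ 𝒮, (I : Set L) ⊆ J} with hT
    have hTj : JoinClosedIdeal T := by
      refine ⟨⟨⊥, ?_⟩, ?_, ?_⟩
      · intro J hJ
        exact hbot J hJ.1
      · intro a b hba haT J hJ
        exact hJ.1.2.1 hba (haT J hJ)
      · intro S hS a hlub J hJ
        exact hJ.1.2.2 S (fun x hx => hS hx J hJ) a hlub
    refine ⟨⟨T, hTj⟩, ?_, ?_⟩
    · intro I hI
      show (I : Set L) ⊆ T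
      intro x hx J hJ
      exact hJ.2 I hI hx
    · intro b hb
      show T ⊆ (b : Set L)
      intro x hx
      exact hx b.val ⟨b.2, fun I hI => hb hI⟩
  · have hIic : ∀ y : L, JoinClosedIdeal (Set.Iic y) := by
      intro y
      refine ⟨⟨y, le_refl y⟩, fun a b hba ha => le_trans hba ha, ?_⟩
      intro S hS a hlub
      exact hlub.2 (fun x hx => hS hx)
    refine ⟨fun y => ⟨Set.Iic y, hIic y⟩, fun y => rfl, ?_, ?_⟩
    · intro x y
      constructor
      · intro h
        show Set.Iic x ⊆ Set.Iic y
        exact Set.Iic_subset_Iic.mpr h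
      · intro h
        exact Set.Iic_subset_Iic.mp h
    · intro a b hba ha
      obtain ⟨y, rfl⟩ := ha
      have hsub : (b : Set L) ⊆ Set.Iic y := hba
      have hne : (upperBounds (b : Set L)).Nonempty :=
        ⟨y, fun x hx => hsub hx⟩
      obtain ⟨a0, hglb⟩ := hmeet _ hne
      have hub : a0 ∈ upperBounds (b : Set L) := by
        intro x hx
        exact hglb.2 (fun u hu => hu hx)
      have hlub : IsLUB (b : Set L) a0 := ⟨hub, fun u hu => hglb.1 hu⟩
      have ha0 : a0 ∈ (b : Set L) := b.2.2.2 _ (subset_refl _) a0 hlub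
      refine ⟨a0, Subtype.ext ?_⟩
      ext x
      constructor
      · intro hx
        exact b.2.2.1 hx ha0
      · intro hx
        exact hub hx
end

section
/- Let L be a nonempty complete meet-semilattice and P ⊆ L × L a relation satisfying: (i) P is symmetric; (ii) for each x ∈ L the set {y ∈ L | (x,y) ∈ P} is a nonempty join-closed order ideal of L; (iii) (a,a) ∈ P implies a = 0. Then there is an order-isomorphism of L onto an order ideal of a complete ortholattice. -/
universe u

/-- A bundled complete ortholattice: a complete lattice together with an
order-reversing involution `oc` satisfying `z ⊔ oc z = ⊤` and `z ⊓ oc z = ⊥`. -/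
structure CompleteOrtholattice : Type (u + 1) where
  carrier : Type u
  [lat : CompleteLattice carrier]
  oc : carrier → carrier
  oc_antitone : ∀ {a b : carrier}, a ≤ b → oc b ≤ oc a
  oc_involutive : ∀ z : carrier, oc (oc z) = z
  sup_oc : ∀ z : carrier, z ⊔ oc z = ⊤
  inf_oc : ∀ z : carrier, z ⊓ oc z = ⊥

attribute [instance] CompleteOrtholattice.lat

namespace Stmt7Aux

/-- Horizontal sum: a lower copy `dn` of `L` and an upper copy `up` of `Lᵒᵈ`. -/
inductive O (L : Type u) : Type u
  | dn : L → O L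
  | up : L → O L

variable {L : Type u} [PartialOrder L] [OrderBot L]

/-- Order on the horizontal sum. -/
def ole : O L → O L → Prop
  | .dn a, .dn a' => a ≤ a'
  | .dn a, .up b => a = ⊥ ∨ b = ⊥
  | .up _, .dn _ => False
  | .up b, .up b' => b' ≤ b

instance : PartialOrder (O L) where
  le := ole
  le_refl x := by cases x <;> simp [ole]
  le_trans x y z hxy hyz := by
    cases x <;> cases y <;> cases z <;> simp only [ole] at *
    · exact le_trans hxy hyz
    · rcases hyz with h | h
      · exact Or.inl (le_antisymm (h ▸ hxy) bot_le)
      · exact Or.inr h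
    · rcases hxy with h | h
      · exact Or.inl h
      · exact Or.inr (le_antisymm (h ▸ hyz) bot_le)
    · exact le_trans hyz hxy
  le_antisymm x y hxy hyx := by
    cases x <;> cases y <;> simp only [ole] at *
    · exact congrArg O.dn (le_antisymm hxy hyx)
    · exact congrArg O.up (le_antisymm hyx hxy)

@[simp] lemma dn_le_dn {a b : L} : (O.dn a : O L) ≤ O.dn b ↔ a ≤ b := Iff.rfl
@[simp] lemma dn_le_up {a b : L} : (O.dn a : O L) ≤ O.up b ↔ a = ⊥ ∨ b = ⊥ := Iff.rfl
@[simp] lemma up_le_dn {a b : L} : ¬ ((O.up a : O L) ≤ O.dn b) := id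
@[simp] lemma up_le_up {a b : L} : (O.up a : O L) ≤ O.up b ↔ b ≤ a := Iff.rfl

lemma dn_bot_le (x : O L) : (O.dn ⊥ : O L) ≤ x := by
  cases x
  · exact bot_le
  · exact Or.inl rfl

lemma le_up_bot (x : O L) : x ≤ (O.up ⊥ : O L) := by
  cases x
  · exact Or.inr rfl
  · exact bot_le

/-- Bounded-above sets have a least upper bound. -/
lemma lub_of_bdd (hmeet : ∀ S : Set L, S.Nonempty → ∃ a : L, IsGLB S a) (B : Set L) (hB : (upperBounds B).Nonempty) :
    ∃ m : L, IsLUB B m := by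
  obtain ⟨m, hm⟩ := hmeet (upperBounds B) hB
  exact ⟨m, fun b hb => hm.2 (fun u hu => hu hb), hm.1⟩

open Classical in
/-- Infimum of a set in the horizontal sum. -/
noncomputable def oInf (hmeet : ∀ S : Set L, S.Nonempty → ∃ a : L, IsGLB S a) (S : Set (O L)) : O L :=
  let A := {a : L | O.dn a ∈ S}
  let B := {b : L | O.up b ∈ S}
  if hA : A.Nonempty then
    if B ⊆ {⊥} then O.dn (Classical.choose (hmeet A hA))
    else O.dn ⊥
  else
    if hB : (upperBounds B).Nonempty then
      O.up (Classical.choose (lub_of_bdd hmeet B hB))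
    else O.dn ⊥

lemma oInf_isGLB (hmeet : ∀ S : Set L, S.Nonempty → ∃ a : L, IsGLB S a) (S : Set (O L)) : IsGLB S (oInf hmeet S) := by
  classical
  set A := {a : L | O.dn a ∈ S} with hAdef
  set B := {b : L | O.up b ∈ S} with hBdef
  unfold oInf
  by_cases hA : A.Nonempty
  · rw [dif_pos hA]
    by_cases hBbot : B ⊆ {⊥}
    · rw [if_pos hBbot]
      have hglb := Classical.choose_spec (hmeet A hA)
      set m := Classical.choose (hmeet A hA)
      constructor
      · rintro (a | b) hx
        · exact hglb.1 hx
        · exact Or.inr (hBbot hx)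
      · rintro (c | b') hz
        · exact hglb.2 (fun a ha => hz ha)
        · obtain ⟨a, ha⟩ := hA
          exact absurd (hz ha) (up_le_dn)
    · rw [if_neg hBbot]
      obtain ⟨b, hbB, hbne⟩ : ∃ b ∈ B, b ≠ ⊥ := by
        by_contra h
        push_neg at h
        exact hBbot (fun b hb => h b hb)
      constructor
      · intro x _; exact dn_bot_le x
      · rintro (c | b') hz
        · rcases hz hbB with h | h
          · exact h.le
          · exact absurd h hbne
        · obtain ⟨a, ha⟩ := hA
          exact absurd (hz ha) (up_le_dn)
  · rw [dif_neg hA]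
    by_cases hB : (upperBounds B).Nonempty
    · rw [dif_pos hB]
      have hlub := Classical.choose_spec (lub_of_bdd hmeet B hB)
      set m := Classical.choose (lub_of_bdd hmeet B hB)
      constructor
      · rintro (a | b) hx
        · exact absurd ⟨a, hx⟩ hA
        · exact hlub.1 hx
      · rintro (c | b') hz
        · by_cases hBb : ∃ b ∈ B, b ≠ ⊥
          · obtain ⟨b, hbB, hbne⟩ := hBb
            rcases hz hbB with h | h
            · exact Or.inl h
            · exact absurd h hbne
          · push_neg at hBb
            have : (⊥ : L) ∈ upperBounds B := fun b hb => (hBb b hb).le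
            exact Or.inr (le_antisymm (hlub.2 this) bot_le)
        · exact hlub.2 (fun b hb => hz hb)
    · rw [dif_neg hB]
      obtain ⟨b, hbB, hbne⟩ : ∃ b ∈ B, b ≠ ⊥ := by
        by_contra h
        push_neg at h
        exact hB ⟨⊥, fun b hb => (h b hb).le⟩
      constructor
      · intro x _; exact dn_bot_le x
      · rintro (c | b') hz
        · rcases hz hbB with h | h
          · exact h.le
          · exact absurd h hbne
        · exact absurd ⟨b', fun b hb => hz hb⟩ hB

end Stmt7Aux

/-- Let `L` be a nonempty complete meet-semilattice with an orthogonality relation `P`: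
`P` is symmetric, each set `{y | P x y}` is a nonempty join-closed order ideal of `L`,
and `P a a` implies `a = ⊥`. Then `L` is order-isomorphic to an order ideal of a
complete ortholattice. -/
theorem stmt7 {L : Type u} [PartialOrder L] [OrderBot L] [Nonempty L]
    (hmeet : ∀ S : Set L, S.Nonempty → ∃ a : L, IsGLB S a)
    (P : L → L → Prop)
    (hsym : ∀ x y : L, P x y → P y x)
    (hne : ∀ x : L, {y : L | P x y}.Nonempty)
    (hlower : ∀ x : L, IsLowerSet {y : L | P x y})
    (hjoin : ∀ x : L, ∀ S ⊆ {y : L | P x y}, ∀ a : L, IsLUB S a → P x a)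
    (hdiag : ∀ a : L, P a a → a = ⊥) :
    ∃ (M : CompleteOrtholattice.{u}) (f : L → M.carrier),
      (∀ x y : L, x ≤ y ↔ f x ≤ f y) ∧ IsLowerSet (Set.range f) := by
  classical
  open Stmt7Aux in
  letI : InfSet (O L) := ⟨oInf hmeet⟩
  letI lat : CompleteLattice (O L) :=
    completeLatticeOfInf (O L) (oInf_isGLB hmeet)
  -- top and bot
  have htop : (⊤ : O L) = O.up ⊥ := le_antisymm (le_up_bot _) le_top
  have hbot : (⊥ : O L) = O.dn ⊥ := le_antisymm bot_le (dn_bot_le _)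
  -- the orthocomplement
  let oc : O L → O L := fun z => match z with
    | .dn a => .up a
    | .up b => .dn b
  have oc_anti : ∀ {x y : O L}, x ≤ y → oc y ≤ oc x := by
    rintro (a | b) (a' | b') h
    · exact h
    · rcases h with h | h
      · exact Or.inr h
      · exact Or.inl h
    · exact absurd h (up_le_dn)
    · exact h
  have oc_inv : ∀ z : O L, oc (oc z) = z := by rintro (a | b) <;> rfl
  have sup_oc : ∀ z : O L, z ⊔ oc z = ⊤ := by
    intro z
    refine le_antisymm le_top ?_
    rw [htop]
    cases z with
    | dn a =>
      have h1 : (O.dn a : O L) ≤ O.dn a ⊔ oc (O.dn a) := le_sup_left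
      have h2 : (O.up a : O L) ≤ O.dn a ⊔ oc (O.dn a) := le_sup_right
      rcases hs : (O.dn a : O L) ⊔ oc (O.dn a) with c | b
      · rw [hs] at h2; exact absurd h2 (up_le_dn)
      · rw [hs] at h1 h2
        rcases h1 with h | h
        · -- a = ⊥, then oc z = up ⊥ = ⊤ and b ≤ a = ⊥
          subst h
          have : b ≤ (⊥ : L) := h2
          simp [le_antisymm this bot_le]
        · simp [h]
    | up b =>
      have h1 : (O.up b : O L) ≤ O.up b ⊔ oc (O.up b) := le_sup_left
      have h2 : (O.dn b : O L) ≤ O.up b ⊔ oc (O.up b) := le_sup_right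
      rcases hs : (O.up b : O L) ⊔ oc (O.up b) with c | b'
      · rw [hs] at h1; exact absurd h1 (up_le_dn)
      · rw [hs] at h1 h2
        rcases h2 with h | h
        · subst h
          have : b' ≤ (⊥ : L) := h1
          simp [le_antisymm this bot_le]
        · simp [h]
  have inf_oc : ∀ z : O L, z ⊓ oc z = ⊥ := by
    intro z
    refine le_antisymm ?_ bot_le
    rw [hbot]
    cases z with
    | dn a =>
      have h1 : (O.dn a : O L) ⊓ oc (O.dn a) ≤ O.dn a := inf_le_left
      have h2 : (O.dn a : O L) ⊓ oc (O.dn a) ≤ O.up a := inf_le_right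
      rcases hs : (O.dn a : O L) ⊓ oc (O.dn a) with c | b
      · rw [hs] at h1 h2
        rcases h2 with h | h
        · simp [h]
        · subst h
          have : c ≤ (⊥ : L) := h1
          simp [le_antisymm this bot_le]
      · rw [hs] at h1; exact absurd h1 (up_le_dn)
    | up b =>
      have h1 : (O.up b : O L) ⊓ oc (O.up b) ≤ O.up b := inf_le_left
      have h2 : (O.up b : O L) ⊓ oc (O.up b) ≤ O.dn b := inf_le_right
      rcases hs : (O.up b : O L) ⊓ oc (O.up b) with c | b'
      · rw [hs] at h1 h2
        rcases h1 with h | h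
        · simp [h]
        · subst h
          have : c ≤ (⊥ : L) := h2
          simp [le_antisymm this bot_le]
      · rw [hs] at h2; exact absurd h2 (up_le_dn)
  refine ⟨⟨O L, oc, oc_anti, oc_inv, sup_oc, inf_oc⟩, O.dn, fun x y => Iff.rfl, ?_⟩
  rintro x y hle ⟨a, rfl⟩
  cases y with
  | dn c => exact ⟨c, rfl⟩
  | up b => exact absurd hle (up_le_dn)
end

section
/- Let X be a finite set and B the subring (without 1) of the free Boolean algebra on X generated by X. Then B has identity element 1_B = ∑_{∅ ⊊ Y ⊆ X} ∏_{y∈Y} y = 1 + e_∅, where e_∅ = ∏_{y∈X}(1+y); that is, 1_B · b = b for all b ∈ B. -/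
/-- The free Boolean algebra on a set `σ`, realized as `F₂[σ]/(x² + x : x ∈ σ)`. -/
abbrev FreeBoolAlg (σ : Type) : Type :=
  MvPolynomial σ (ZMod 2) ⧸
    (Ideal.span (Set.range fun i : σ =>
        (MvPolynomial.X i : MvPolynomial σ (ZMod 2)) ^ 2 + MvPolynomial.X i)
      : Ideal (MvPolynomial σ (ZMod 2)))

/-- The element `e_∅ = ∏_{y ∈ σ} (1 + y)` of the free Boolean algebra. -/
noncomputable def eEmpty (σ : Type) [Fintype σ] : FreeBoolAlg σ :=
  Ideal.Quotient.mk _ (∏ y : σ, (1 + MvPolynomial.X y : MvPolynomial σ (ZMod 2)))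

/-- The candidate identity `∑_{∅ ⊊ Y ⊆ σ} ∏_{y ∈ Y} y` of the free Boolean ring. -/
noncomputable def oneB (σ : Type) [Fintype σ] [DecidableEq σ] : FreeBoolAlg σ :=
  ∑ Y ∈ Finset.univ.filter (fun Y : Finset σ => Y.Nonempty),
    Ideal.Quotient.mk _ (∏ y ∈ Y, (MvPolynomial.X y : MvPolynomial σ (ZMod 2)))

lemma eEmpty_mul_X {σ : Type} [Fintype σ] [DecidableEq σ] (i : σ) :
    eEmpty σ * Ideal.Quotient.mk _ (MvPolynomial.X i) = 0 := by
  rw [eEmpty, ← map_mul, Ideal.Quotient.eq_zero_iff_mem]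
  have h : (∏ y : σ, (1 + MvPolynomial.X y : MvPolynomial σ (ZMod 2))) * MvPolynomial.X i
      = (∏ y ∈ Finset.univ.erase i, (1 + MvPolynomial.X y : MvPolynomial σ (ZMod 2))) *
        ((MvPolynomial.X i) ^ 2 + MvPolynomial.X i) := by
    rw [← Finset.prod_erase_mul _ _ (Finset.mem_univ i)]
    ring
  rw [h]
  exact Ideal.mul_mem_left _ _ (Ideal.subset_span ⟨i, rfl⟩)

lemma eEmpty_mul {σ : Type} [Fintype σ] [DecidableEq σ] (b : FreeBoolAlg σ)
    (hb : b ∈ NonUnitalSubring.closure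
      (Set.range fun i : σ =>
        (Ideal.Quotient.mk _ (MvPolynomial.X i) : FreeBoolAlg σ))) :
    eEmpty σ * b = 0 := by
  induction hb using NonUnitalSubring.closure_induction with
  | mem x hx => obtain ⟨i, rfl⟩ := hx; exact eEmpty_mul_X i
  | zero => exact mul_zero _
  | add x y hx hy px py => rw [mul_add, px, py, add_zero]
  | neg x hx px => rw [show eEmpty σ * -x = -(eEmpty σ * x) from by ring, px, neg_zero]
  | mul x y hx hy px py => rw [← mul_assoc, px, zero_mul]

lemma oneB_eq {σ : Type} [Fintype σ] [DecidableEq σ] : oneB σ = 1 + eEmpty σ := by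
  rw [oneB, eEmpty, ← map_sum]
  have h1 : (1 : FreeBoolAlg σ) = Ideal.Quotient.mk _ 1 := rfl
  rw [h1, ← map_add]
  congr 1
  have expand : (∏ y : σ, (1 + MvPolynomial.X y : MvPolynomial σ (ZMod 2)))
      = ∑ t ∈ (Finset.univ : Finset σ).powerset,
          ∏ y ∈ t, (MvPolynomial.X y : MvPolynomial σ (ZMod 2)) := by
    have := Finset.prod_add (fun y : σ => (MvPolynomial.X y : MvPolynomial σ (ZMod 2)))
      (fun _ => 1) (Finset.univ : Finset σ)
    simp only [Finset.prod_const_one, mul_one] at this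
    rw [← this]
    exact Finset.prod_congr rfl fun y _ => add_comm _ _
  have hfilter : Finset.univ.filter (fun Y : Finset σ => Y.Nonempty)
      = (Finset.univ : Finset (Finset σ)).erase ∅ := by
    ext Y
    simp [Finset.nonempty_iff_ne_empty]
  have h2 : ((1 : MvPolynomial σ (ZMod 2)) + 1) = 0 := by
    rw [one_add_one_eq_two]
    exact_mod_cast CharP.cast_eq_zero (MvPolynomial σ (ZMod 2)) 2
  rw [expand, Finset.powerset_univ, hfilter,
    ← Finset.add_sum_erase _ _ (Finset.mem_univ (∅ : Finset σ)), Finset.prod_empty,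
    ← add_assoc, h2, zero_add]

/-- Let `σ` be a finite set and `B` the subring (without 1) of the free Boolean algebra
on `σ` generated by `σ`. Then the element `1_B = ∑_{∅ ⊊ Y ⊆ σ} ∏_{y ∈ Y} y` lies in
`B`, equals `1 + e_∅` where `e_∅ = ∏_{y ∈ σ} (1 + y)`, and is an identity element of
`B`: `1_B · b = b` for all `b ∈ B`. -/
theorem stmt11 {σ : Type} [Fintype σ] [DecidableEq σ] :
    oneB σ ∈ NonUnitalSubring.closure
      (Set.range fun i : σ =>
        (Ideal.Quotient.mk _ (MvPolynomial.X i) : FreeBoolAlg σ)) ∧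
    oneB σ = 1 + eEmpty σ ∧
    ∀ b ∈ NonUnitalSubring.closure
      (Set.range fun i : σ =>
        (Ideal.Quotient.mk _ (MvPolynomial.X i) : FreeBoolAlg σ)),
      oneB σ * b = b := by
  refine ⟨?_, oneB_eq, ?_⟩
  · rw [oneB]
    refine sum_mem fun Y hY => ?_
    rw [Finset.mem_filter] at hY
    rw [map_prod]
    refine Finset.prod_induction_nonempty _ _ (fun a b ha hb => mul_mem ha hb) hY.2
      fun y _ => NonUnitalSubring.subset_closure ⟨y, rfl⟩
  · intro b hb
    rw [oneB_eq, add_mul, one_mul, eEmpty_mul b hb, add_zero]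
end

section
/- Let (W,S) be a Coxeter system and s ∈ S, w, x ∈ W. Then l(wsx) > l(wx) if and only if l(ws) − l(w) = l(sx) − l(x). -/
/-!
For a reflection `t`, let `η(w, t) ∈ {±1}` be the sign cocycle of the action of `W` on
`W × {±1}` in which `s` acts by `(t, ε) ↦ (s t s, -ε)` if `t = s` and `(s t s, ε)` otherwise.
Along a word for `w` the sign flips once for each occurrence of `t` in the right inversion
sequence, so `η(w, t) = -1` forces `t` to be a right inversion of `w`; since
`η(w t, t) = -η(w, t)`, the converse follows, and `η(w, t) = -1` exactly when
`ℓ(w t) < ℓ(w)`. With the reflection `t = x⁻¹ s x` one has `w s x = (w x) t` and `s x = x t`,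
and the cocycle identity `η(w x, t) = η(w, s) η(x, t)` compares the three length changes.

The action is well defined because the word `(s s')^{m(s, s')}` has trivial product, so its
right and left inversion sequences agree, and the latter is periodic of period `m(s, s')`:
every reflection occurs in it an even number of times.
-/

theorem List.even_count_of_getElem_add_eq {α : Type*} [BEq α] (L : List α) (n : ℕ)
    (hL : L.length = 2 * n) (h : ∀ k (hk : k < n), L[k + n] = L[k]) (a : α) :
    Even (L.count a) := by
  have hdrop : L.drop n = L.take n := by
    apply List.ext_getElem
    · simp; omega
    · intro k _ hk
      simp only [List.getElem_drop, List.getElem_take, add_comm n]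
      exact h k (by simp at hk; omega)
  rw [← List.take_append_drop n L, List.count_append, hdrop]
  exact ⟨_, rfl⟩

namespace CoxeterSystem

open scoped Classical

variable {B W : Type*} [Group W] {M : CoxeterMatrix B} (cs : CoxeterSystem M W)

local prefix:100 "s" => cs.simple
local prefix:100 "π" => cs.wordProd
local prefix:100 "ℓ" => cs.length
local prefix:100 "ris" => cs.rightInvSeq
local prefix:100 "lis" => cs.leftInvSeq

theorem rightInvSeq_eq_leftInvSeq_of_wordProd_eq_one {ω : List B} (hω : π ω = 1) :
    ris ω = lis ω := by
  apply List.ext_getElem (by simp)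
  intro j h₁ _
  have hj : j < ω.length := by simpa using h₁
  have hsplit : π (ω.take j) * s ω[j] * π (ω.drop (j + 1)) = 1 := by
    rw [← hω, mul_assoc, ← wordProd_cons, ← wordProd_append, ← List.drop_eq_getElem_cons hj,
      List.take_append_drop]
  rw [getElem_rightInvSeq _ _ _ hj, getElem_leftInvSeq _ _ _ hj, List.getElem?_eq_getElem hj,
    Option.map_some, Option.getD_some, eq_inv_of_mul_eq_one_right hsplit]
  simp [mul_assoc]

theorem wordProd_alternatingWord_two_mul (i i' : B) :
    π (alternatingWord i i' (2 * M i i')) = 1 := by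
  simp [prod_alternatingWord_eq_mul_pow]

theorem getElem_leftInvSeq_alternatingWord_add (i i' : B) (k : ℕ) (hk : k < M i i') :
    (lis (alternatingWord i i' (2 * M i i')))[k + M i i']'(by simp; omega) =
      (lis (alternatingWord i i' (2 * M i i')))[k]'(by simp; omega) := by
  rw [getElem_leftInvSeq_alternatingWord _ _ _ _ _ (by omega),
    getElem_leftInvSeq_alternatingWord _ _ _ _ _ (by omega),
    prod_alternatingWord_eq_mul_pow, prod_alternatingWord_eq_mul_pow,
    show (2 * (k + M i i') + 1) / 2 = k + M i i' by omega, pow_add, simple_mul_simple_pow',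
    mul_one, show (2 * k + 1) / 2 = k by omega]
  simp

theorem even_count_rightInvSeq_alternatingWord (i i' : B) (t : W) :
    Even ((ris (alternatingWord i i' (2 * M i i'))).count t) := by
  rw [rightInvSeq_eq_leftInvSeq_of_wordProd_eq_one cs (wordProd_alternatingWord_two_mul cs i i')]
  exact List.even_count_of_getElem_add_eq _ (M i i') (by simp)
    (getElem_leftInvSeq_alternatingWord_add cs i i') t

noncomputable def signPerm (i : B) : Equiv.Perm (W × ℤˣ) :=
  Function.Involutive.toPerm
    (fun p => (s i * p.1 * s i, (if p.1 = s i then -1 else 1) * p.2)) (by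
      rintro ⟨t, ε⟩
      have hconj : s i * (s i * t * s i) * s i = t := by simp [mul_assoc]
      have hcond : s i * t * s i = s i ↔ t = s i := by
        constructor <;> rintro h <;> [rw [← hconj, h]; rw [h]] <;> simp
      by_cases h : t = s i <;> simp [hconj, hcond, h])

theorem signPerm_apply (i : B) (t : W) (ε : ℤˣ) :
    cs.signPerm i (t, ε) = (s i * t * s i, (if t = s i then -1 else 1) * ε) := rfl

theorem prod_map_signPerm_apply (ω : List B) (t : W) (ε : ℤˣ) :
    (ω.map cs.signPerm).prod (t, ε) =
      (π ω * t * (π ω)⁻¹, (-1) ^ (ris ω).count t * ε) := by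
  induction ω with
  | nil => simp
  | cons i ω ih =>
    have hcond : π ω * t * (π ω)⁻¹ = s i ↔ (π ω)⁻¹ * s i * π ω = t := by
      constructor <;> intro h <;> rw [← h] <;> group
    rw [List.map_cons, List.prod_cons, Equiv.Perm.mul_apply, ih, signPerm_apply, rightInvSeq,
      List.count_cons, wordProd_cons]
    refine Prod.ext (by simp [mul_assoc]) ?_
    by_cases h : (π ω)⁻¹ * s i * π ω = t <;> simp [h, hcond, pow_succ]

theorem isLiftable_signPerm : M.IsLiftable cs.signPerm := by
  intro i i'
  have hword : ∀ m, ((alternatingWord i i' (2 * m)).map cs.signPerm).prod =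
      (cs.signPerm i * cs.signPerm i') ^ m := by
    intro m
    induction m with
    | zero => rfl
    | succ m ih =>
      rw [show 2 * (m + 1) = 2 * m + 1 + 1 by omega, alternatingWord_succ', alternatingWord_succ',
        if_neg (Nat.not_even_two_mul_add_one m), if_pos (even_two_mul m)]
      simp [ih, pow_succ', mul_assoc]
  ext ⟨t, ε⟩ : 1
  rw [← hword, prod_map_signPerm_apply, wordProd_alternatingWord_two_mul,
    (even_count_rightInvSeq_alternatingWord cs i i' t).neg_one_pow]
  simp

noncomputable def signRep : W →* Equiv.Perm (W × ℤˣ) :=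
  cs.lift ⟨cs.signPerm, cs.isLiftable_signPerm⟩

theorem signRep_wordProd (ω : List B) : cs.signRep (π ω) = (ω.map cs.signPerm).prod := by
  simp only [signRep, wordProd, map_list_prod, List.map_map]
  congr 2
  ext i : 1
  exact cs.lift_apply_simple _ i

noncomputable def inversionSign (w t : W) : ℤˣ := (cs.signRep w (t, 1)).2

theorem inversionSign_wordProd (ω : List B) (t : W) :
    cs.inversionSign (π ω) t = (-1) ^ (ris ω).count t := by
  simp [inversionSign, signRep_wordProd, prod_map_signPerm_apply]

theorem signRep_apply (w t : W) (ε : ℤˣ) :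
    cs.signRep w (t, ε) = (w * t * w⁻¹, cs.inversionSign w t * ε) := by
  obtain ⟨ω, rfl⟩ := cs.wordProd_surjective w
  rw [signRep_wordProd, prod_map_signPerm_apply, inversionSign_wordProd]

theorem inversionSign_mul (u v t : W) :
    cs.inversionSign (u * v) t = cs.inversionSign u (v * t * v⁻¹) * cs.inversionSign v t := by
  have h := congrArg Prod.snd (congrFun (congrArg DFunLike.coe (map_mul cs.signRep u v)) (t, 1))
  simpa only [Equiv.Perm.mul_apply, signRep_apply, mul_one] using h

theorem inversionSign_one (t : W) : cs.inversionSign 1 t = 1 := by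
  simp [inversionSign]

theorem inversionSign_simple (i : B) (t : W) :
    cs.inversionSign (s i) t = if t = s i then -1 else 1 := by
  simp [inversionSign, signRep, signPerm_apply]

theorem inversionSign_inv_conj (w t : W) :
    cs.inversionSign w⁻¹ (w * t * w⁻¹) = (cs.inversionSign w t)⁻¹ := by
  rw [eq_inv_iff_mul_eq_one, ← inversionSign_mul, inv_mul_cancel, inversionSign_one]

variable {cs} in
theorem IsReflection.inversionSign_self {t : W} (ht : cs.IsReflection t) :
    cs.inversionSign t t = -1 := by
  obtain ⟨u, i, rfl⟩ := ht
  rw [inversionSign_mul, inversionSign_mul, inversionSign_inv_conj,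
    show u⁻¹ * (u * s i * u⁻¹) * u⁻¹⁻¹ = s i by group, show s i * s i * (s i)⁻¹ = s i by group,
    inversionSign_simple, if_pos rfl]
  simp

theorem isRightInversion_of_inversionSign_eq_neg_one {w t : W}
    (h : cs.inversionSign w t = -1) : cs.IsRightInversion w t := by
  obtain ⟨ω, hω, rfl⟩ := cs.exists_isReduced w
  refine cs.isRightInversion_of_mem_rightInvSeq hω (List.count_pos_iff.mp (Nat.pos_of_ne_zero ?_))
  intro h0
  rw [inversionSign_wordProd, h0, pow_zero] at h
  exact absurd h (by decide)

theorem inversionSign_eq_neg_one_iff {t : W} (ht : cs.IsReflection t) (w : W) :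
    cs.inversionSign w t = -1 ↔ ℓ (w * t) < ℓ w := by
  refine ⟨fun h => (cs.isRightInversion_of_inversionSign_eq_neg_one h).2, fun hlt => ?_⟩
  by_contra hne
  have hflip : cs.inversionSign (w * t) t = -1 := by
    rw [inversionSign_mul, show t * t * t⁻¹ = t by group, ht.inversionSign_self,
      (Int.units_eq_one_or _).resolve_right hne, one_mul]
  have := (cs.isRightInversion_of_inversionSign_eq_neg_one hflip).2
  rw [mul_assoc, ht.mul_self, mul_one] at this
  omega

theorem length_mul_simple_mul_lt_iff (i : B) (w x : W) :
    ℓ (w * s i * x) < ℓ (w * x) ↔ ¬(ℓ (w * s i) < ℓ w ↔ ℓ (s i * x) < ℓ x) := by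
  set t := x⁻¹ * s i * x with ht_def
  have ht : cs.IsReflection t := by simpa using (cs.isReflection_simple i).conj x⁻¹
  have hsign : cs.inversionSign (w * x) t = cs.inversionSign w (s i) * cs.inversionSign x t := by
    rw [inversionSign_mul, show x * t * x⁻¹ = s i by rw [ht_def]; group]
  rw [show w * s i * x = w * x * t by rw [ht_def]; group,
    show s i * x = x * t by rw [ht_def]; group,
    ← inversionSign_eq_neg_one_iff cs ht, ← inversionSign_eq_neg_one_iff cs ht,
    ← inversionSign_eq_neg_one_iff cs (cs.isReflection_simple i), hsign]
  rcases Int.units_eq_one_or (cs.inversionSign w (s i)) with h | h <;>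
    rcases Int.units_eq_one_or (cs.inversionSign x t) with h' | h' <;> simp [h, h']

end CoxeterSystem

/-- Let `(W, S)` be a Coxeter system with length function `l`, let `s ∈ S` and
`w, x ∈ W`. Then `l(wsx) > l(wx)` if and only if `l(ws) − l(w) = l(sx) − l(x)`. -/
theorem stmt16 {B W : Type*} [Group W] {M : CoxeterMatrix B} (cs : CoxeterSystem M W)
    (i : B) (w x : W) :
    cs.length (w * cs.simple i * x) > cs.length (w * x) ↔
      (cs.length (w * cs.simple i) : ℤ) - cs.length w =
        (cs.length (cs.simple i * x) : ℤ) - cs.length x := by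
  have hne : cs.length (w * cs.simple i * x) ≠ cs.length (w * x) := by
    simpa [mul_assoc] using ((cs.isReflection_simple i).conj x⁻¹).length_mul_left_ne (w * x)
  have key := cs.length_mul_simple_mul_lt_iff i w x
  rcases cs.length_mul_simple w i with hw | hw <;>
    rcases cs.length_simple_mul x i with hx | hx <;> omega
end
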